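/- For every positive integer n, as integers, E₂(n) − E₃(n) equals 2·(−1)ⁿ if n is a perfect square and equals 0 otherwise, where E₂(n) (respectively E₃(n)) is the number of two-color partitions of n counted by E(n) whose total number of parts is even (respectively odd). -/

import Mathlib

/-!
The signed count `E₂(n) - E₃(n)` is the coefficient of `qⁿ` in
`∏ₖ (1 - q^(2k-1)) · ∏ₖ (1 - q^k) = ∏ₖ (1 - q^(2k-1))² (1 - q^(2k))`, which by Jacobi's triple
product at `z = -1` is `∑_{j ∈ ℤ} (-1)^j q^(j²)`; for `n = r² > 0` the terms `j = ±r` give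
`2 (-1)^r = 2 (-1)ⁿ`.

We use a finite form. The q-binomial theorem applied to `∏_{i<2N} (q^(2N-1) - q^(2i))` gives
`q^E ∏_{m<N} (1 - q^(2m+1))² = ∑_k (-1)^(k-N) q^(E + (k-N)²) [2N, k]_{q²}`, and
`[2N, k]_{q²} · (q²; q²)_N ≡ 1` modulo `q^(2(N - |k-N|) + 2)`, which isolates the coefficient of
`qⁿ` once `N ≥ n`.
-/

open Finset Polynomial

section Semiring

variable {R : Type*} [CommSemiring R]

def qBinom (q : R) : ℕ → ℕ → R
  | _, 0 => 1
  | 0, _ + 1 => 0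
  | n + 1, k + 1 => qBinom q n k + q ^ (k + 1) * qBinom q n (k + 1)

namespace qBinom

@[simp]
lemma zero_right (q : R) (n : ℕ) : qBinom q n 0 = 1 := by
  cases n <;> rfl

lemma succ_succ (q : R) (n k : ℕ) :
    qBinom q (n + 1) (k + 1) = qBinom q n k + q ^ (k + 1) * qBinom q n (k + 1) := rfl

lemma eq_zero_of_lt (q : R) : ∀ {n k : ℕ}, n < k → qBinom q n k = 0
  | 0, _ + 1, _ => rfl
  | n + 1, k + 1, h => by
    rw [succ_succ, eq_zero_of_lt q (by omega), eq_zero_of_lt q (by omega), mul_zero, add_zero]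

end qBinom

theorem prod_add_mul_pow_eq_sum_qBinom (q a : R) : ∀ (n : ℕ) (z : R),
    ∏ i ∈ range n, (a + z * q ^ i) =
      ∑ k ∈ range (n + 1), q ^ k.choose 2 * qBinom q n k * z ^ k * a ^ (n - k)
  | 0, z => by simp
  | n + 1, z => by
    have hchoose (k : ℕ) : (k + 1).choose 2 = k.choose 2 + k := by
      simp [Nat.choose_succ_succ, add_comm]
    -- peel off the factor `i = 0`; the remaining product is the case `n` with `z * q` for `z`
    have ih := prod_add_mul_pow_eq_sum_qBinom q a n (z * q)
    simp only [mul_assoc z q, ← pow_succ'] at ih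
    have hlow : a * ∑ k ∈ range (n + 1), q ^ k.choose 2 * qBinom q n k * (z * q) ^ k * a ^ (n - k) =
        a ^ (n + 1) + ∑ k ∈ range (n + 1),
          q ^ (k + 1).choose 2 * (q ^ (k + 1) * qBinom q n (k + 1)) * z ^ (k + 1) *
            a ^ (n - k) := by
      rw [sum_range_succ' _ n, mul_add, mul_sum]
      conv_rhs => rw [sum_range_succ, qBinom.eq_zero_of_lt q (Nat.lt_succ_self n)]
      have hterm : ∀ k ∈ range n,
          a * (q ^ (k + 1).choose 2 * qBinom q n (k + 1) * (z * q) ^ (k + 1) * a ^ (n - (k + 1))) =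
            q ^ (k + 1).choose 2 * (q ^ (k + 1) * qBinom q n (k + 1)) * z ^ (k + 1) *
              a ^ (n - k) := by
        intro k hk
        rw [show n - k = n - (k + 1) + 1 by rw [mem_range] at hk; omega]
        ring
      rw [sum_congr rfl hterm]
      simp only [Nat.choose_zero_succ, pow_zero, qBinom.zero_right, mul_one, tsub_zero, one_mul,
        mul_zero, zero_mul, tsub_self, add_zero]
      ring
    have hhigh :
        z * ∑ k ∈ range (n + 1), q ^ k.choose 2 * qBinom q n k * (z * q) ^ k * a ^ (n - k) =
          ∑ k ∈ range (n + 1), q ^ (k + 1).choose 2 * qBinom q n k * z ^ (k + 1) * a ^ (n - k) := by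
      rw [mul_sum]
      refine sum_congr rfl fun k _ => ?_
      rw [hchoose]; ring
    rw [prod_range_succ', pow_zero, mul_one, ih, mul_comm, add_mul, hlow, hhigh,
      sum_range_succ' _ (n + 1)]
    simp only [qBinom.succ_succ, Nat.add_sub_add_right, mul_add, add_mul, sum_add_distrib,
      Nat.choose_zero_succ, pow_zero, qBinom.zero_right, mul_one, tsub_zero, one_mul]
    ring

end Semiring

section Ring

variable {R : Type*} [CommRing R]

/-- For `k > n` both sides vanish: the factor `i = n` on the right is `1 - q ^ 0`. -/
lemma qBinom.mul_prod_one_sub_pow (q : R) : ∀ n k : ℕ,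
    qBinom q n k * ∏ i ∈ range k, (1 - q ^ (i + 1)) = ∏ i ∈ range k, (1 - q ^ (n - i))
  | _, 0 => by simp
  | 0, k + 1 => by simp [eq_zero_of_lt q (Nat.succ_pos k), prod_range_succ']
  | n + 1, k + 1 => by
    set F := ∏ i ∈ range k, (1 - q ^ (n - i))
    have ih₁ : qBinom q n k * ∏ i ∈ range k, (1 - q ^ (i + 1)) = F :=
      qBinom.mul_prod_one_sub_pow q n k
    have ih₂ : qBinom q n (k + 1) * ∏ i ∈ range (k + 1), (1 - q ^ (i + 1)) =
        F * (1 - q ^ (n - k)) := by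
      rw [qBinom.mul_prod_one_sub_pow q n (k + 1), prod_range_succ]
    have hF : ∏ i ∈ range (k + 1), (1 - q ^ (n + 1 - i)) = F * (1 - q ^ (n + 1)) := by
      simp [prod_range_succ', F]
    rw [hF, succ_succ, add_mul, mul_assoc, ih₂, prod_range_succ, ← mul_assoc, ih₁]
    rcases le_or_gt k n with hkn | hnk
    · have hpow : q ^ (k + 1) * q ^ (n - k) = q ^ (n + 1) := by rw [← pow_add]; congr 1; omega
      linear_combination (-F) * hpow
    · have hzero : F = 0 := prod_eq_zero (mem_range.2 hnk) (by simp)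
      simp [hzero]

lemma prod_range_two_mul_pow_sub_pow (q : R) (N : ℕ) :
    ∏ i ∈ range (2 * N), (q ^ (2 * N - 1) - q ^ (2 * i)) =
      (-1) ^ N * q ^ (N * (3 * N - 2)) * ∏ m ∈ range N, (1 - q ^ (2 * m + 1)) ^ 2 := by
  have hlow : ∀ m ∈ range N, q ^ (2 * N - 1) - q ^ (2 * (N - 1 - m)) =
      -(q ^ (2 * (N - 1 - m)) * (1 - q ^ (2 * m + 1))) := by
    intro m hm
    rw [mul_one_sub, ← pow_add, show 2 * (N - 1 - m) + (2 * m + 1) = 2 * N - 1 by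
      rw [mem_range] at hm; omega]
    ring
  have hhigh : ∀ m ∈ range N, q ^ (2 * N - 1) - q ^ (2 * (N + m)) =
      q ^ (2 * N - 1) * (1 - q ^ (2 * m + 1)) := by
    intro m hm
    rw [mul_one_sub, ← pow_add, show 2 * N - 1 + (2 * m + 1) = 2 * (N + m) by
      rw [mem_range] at hm; omega]
  have hexp : ∑ m ∈ range N, 2 * (N - 1 - m) + (2 * N - 1) * N = N * (3 * N - 2) := by
    rw [← mul_sum, sum_range_reflect (fun m => m) N, mul_comm 2, sum_range_id_mul_two]
    rcases N with _ | N
    · rfl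
    · simp only [Nat.add_sub_cancel]
      rw [show 2 * (N + 1) - 1 = 2 * N + 1 by omega, show 3 * (N + 1) - 2 = 3 * N + 1 by omega]
      ring
  rw [show range (2 * N) = range (N + N) by rw [two_mul], prod_range_add, ← prod_range_reflect,
    prod_congr rfl hlow, prod_congr rfl hhigh, prod_neg, prod_mul_distrib, prod_mul_distrib,
    prod_pow_eq_pow_sum, prod_const, card_range, ← pow_mul, ← hexp, pow_add, prod_pow]
  ring

lemma two_mul_choose_two_add_mul_sub (N k : ℕ) (hk : k ≤ 2 * N) :
    2 * k.choose 2 + (2 * N - 1) * (2 * N - k) = N * (3 * N - 2) + ((k : ℤ) - N).natAbs ^ 2 := by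
  rw [Nat.choose_two_right, Nat.mul_div_cancel' (Nat.even_mul_pred_self k).two_dvd]
  rcases N with _ | N
  · obtain rfl : k = 0 := by omega
    rfl
  zify [hk, show 1 ≤ 2 * (N + 1) by omega, show 2 ≤ 3 * (N + 1) by omega]
  rcases k with _ | k <;> push_cast [Int.natAbs_sq, sq_abs] <;> ring

theorem finite_jacobi_triple_product_neg_one (q : R) (N : ℕ) :
    (-1) ^ N * q ^ (N * (3 * N - 2)) * ∏ m ∈ range N, (1 - q ^ (2 * m + 1)) ^ 2 =
      ∑ k ∈ range (2 * N + 1),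
        (-1) ^ k * q ^ (N * (3 * N - 2) + ((k : ℤ) - N).natAbs ^ 2) * qBinom (q ^ 2) (2 * N) k := by
  have h := prod_add_mul_pow_eq_sum_qBinom (q ^ 2) (q ^ (2 * N - 1)) (2 * N) (-1)
  simp only [neg_one_mul, ← sub_eq_add_neg, ← pow_mul] at h
  rw [← prod_range_two_mul_pow_sub_pow, h]
  refine sum_congr rfl fun k hk => ?_
  rw [← two_mul_choose_two_add_mul_sub N k (by rw [mem_range] at hk; omega), pow_add]
  ring

section Congruence

variable {d a b : R}

lemma dvd_mul_sub_one (ha : d ∣ a - 1) (hb : d ∣ b - 1) : d ∣ a * b - 1 := by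
  have := dvd_add (dvd_mul_of_dvd_right hb a) ha
  rwa [show a * (b - 1) + (a - 1) = a * b - 1 by ring] at this

lemma dvd_sub_one_of_dvd_mul_sub_one (hab : d ∣ a * b - 1) (hb : d ∣ b - 1) : d ∣ a - 1 := by
  have := dvd_sub hab (dvd_mul_of_dvd_right hb a)
  rwa [show a * b - 1 - a * (b - 1) = a - 1 by ring] at this

lemma dvd_prod_sub_one {ι : Type*} {s : Finset ι} {f : ι → R} (h : ∀ i ∈ s, d ∣ f i - 1) :
    d ∣ ∏ i ∈ s, f i - 1 :=
  prod_induction f (fun y => d ∣ y - 1) (fun _ _ => dvd_mul_sub_one) (by simp) h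

lemma pow_dvd_prod_one_sub_pow_sub_one (x : R) {M : ℕ} {s : Finset ℕ} {e : ℕ → ℕ}
    (h : ∀ i ∈ s, M ≤ e i) : x ^ M ∣ ∏ i ∈ s, (1 - x ^ e i) - 1 :=
  dvd_prod_sub_one fun i hi => by simpa using (pow_dvd_pow x (h i hi)).neg_right

end Congruence

lemma qBinom.pow_dvd_mul_prod_sub_one (x : R) {n k : ℕ} (hk : k ≤ n) (m : ℕ) :
    x ^ (min (min k m) (n - k) + 1) ∣ qBinom x n k * ∏ i ∈ range m, (1 - x ^ (i + 1)) - 1 := by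
  have hfall : x ^ (min (min k m) (n - k) + 1) ∣ ∏ i ∈ range k, (1 - x ^ (n - i)) - 1 :=
    pow_dvd_prod_one_sub_pow_sub_one x fun i hi => by rw [mem_range] at hi; omega
  have hIco (a b : ℕ) (hab : min (min k m) (n - k) ≤ a) :
      x ^ (min (min k m) (n - k) + 1) ∣ ∏ i ∈ Ico a b, (1 - x ^ (i + 1)) - 1 :=
    pow_dvd_prod_one_sub_pow_sub_one x fun i hi => by rw [mem_Ico] at hi; omega
  rcases le_total k m with hkm | hmk
  · rw [← prod_range_mul_prod_Ico _ hkm, ← mul_assoc, mul_prod_one_sub_pow]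
    exact dvd_mul_sub_one hfall (hIco k m (by omega))
  · refine dvd_sub_one_of_dvd_mul_sub_one ?_ (hIco m k (by omega))
    rwa [mul_assoc, prod_range_mul_prod_Ico _ hmk, mul_prod_one_sub_pow]

lemma Polynomial.coeff_eq_of_X_pow_dvd_sub {f g : R[X]} {e j : ℕ} (h : X ^ e ∣ f - g)
    (hj : j < e) : f.coeff j = g.coeff j := by
  rw [X_pow_dvd_iff] at h
  simpa [sub_eq_zero] using h j hj

lemma coeff_X_pow_mul_qBinom_mul_prod {N n k E : ℕ} (hnN : n ≤ N) (hk : k ≤ 2 * N) :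
    (X ^ (E + ((k : ℤ) - N).natAbs ^ 2) *
        (qBinom (X ^ 2) (2 * N) k * ∏ i ∈ range N, (1 - (X ^ 2) ^ (i + 1))) : R[X]).coeff (n + E) =
      if ((k : ℤ) - N).natAbs ^ 2 = n then 1 else 0 := by
  set d := ((k : ℤ) - N).natAbs
  have hmin : min (min k N) (2 * N - k) = N - d := by omega
  have hcong := qBinom.pow_dvd_mul_prod_sub_one (X ^ 2 : R[X]) hk N
  rw [hmin, ← pow_mul] at hcong
  rw [pow_add, mul_assoc, add_comm n, coeff_X_pow_mul', if_pos (by omega), Nat.add_sub_cancel_left,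
    coeff_X_pow_mul']
  have hd : d ≤ d ^ 2 := Nat.le_self_pow two_ne_zero d
  split_ifs with h₁ h₂ h₂
  · rw [coeff_eq_of_X_pow_dvd_sub hcong (by omega), coeff_one, if_pos (by omega)]
  · rw [coeff_eq_of_X_pow_dvd_sub hcong (by omega), coeff_one, if_neg (by omega)]
  · omega
  · rfl

lemma sum_neg_one_pow_ite_natAbs_sq_eq {N n : ℕ} (hn : 0 < n) (hnN : n ≤ N) :
    ∑ k ∈ range (2 * N + 1), (-1 : ℤ) ^ k * (if ((k : ℤ) - N).natAbs ^ 2 = n then 1 else 0) =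
      if IsSquare n then 2 * (-1) ^ (N + n) else 0 := by
  split_ifs with hsq
  · obtain ⟨r, rfl⟩ := hsq
    have hr : 0 < r := Nat.pos_of_mul_pos_left hn
    have hrN : r ≤ N := le_trans (Nat.le_mul_self r) hnN
    rw [sum_eq_add_of_mem (N - r) (N + r) (mem_range.2 (by omega)) (mem_range.2 (by omega))
      (by omega)]
    · have habs (m : ℤ) : m.natAbs ^ 2 = r * r ↔ m.natAbs = r := by rw [sq, Nat.mul_self_inj]
      have hlow : (-1 : ℤ) ^ (N - r) = (-1) ^ (N + r) := by
        rw [show N + r = N - r + 2 * r by omega, pow_add, pow_mul]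
        simp
      have hsquare : (-1 : ℤ) ^ (r * r) = (-1) ^ r := by
        rw [pow_mul]
        rcases neg_one_pow_eq_or ℤ r with h | h <;> rw [h]
        · exact one_pow r
        · exact h
      rw [if_pos ((habs _).2 (by omega)), if_pos ((habs _).2 (by omega)), hlow, pow_add _ N (r * r),
        hsquare, ← pow_add]
      ring
    · intro c _ hc
      rw [if_neg (by rw [sq, Nat.mul_self_inj]; omega), mul_zero]
  · refine sum_eq_zero fun k _ => ?_
    rw [if_neg fun h => hsq ⟨_, h.symm.trans (sq _)⟩, mul_zero]

theorem coeff_prod_odd_sq_mul_prod_even {N n : ℕ} (hn : 0 < n) (hnN : n ≤ N) :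
    ((∏ m ∈ range N, (1 - X ^ (2 * m + 1)) ^ 2) * ∏ i ∈ range N, (1 - (X ^ 2) ^ (i + 1)) :
      ℤ[X]).coeff n = if IsSquare n then 2 * (-1) ^ n else 0 := by
  set P : ℤ[X] := ∏ i ∈ range N, (1 - (X ^ 2) ^ (i + 1))
  have hneg (k : ℕ) (f : ℤ[X]) (j : ℕ) : ((-1) ^ k * f).coeff j = (-1) ^ k * f.coeff j := by
    rw [← C_1, ← C_neg, ← C_pow, coeff_C_mul]
  -- multiply the finite triple product by `P = (X²; X²)_N` and read off the coefficient
  -- of `X ^ (n + E)` on both sides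
  have h := congrArg (fun f => (f * P).coeff (n + N * (3 * N - 2)))
    (finite_jacobi_triple_product_neg_one (X : ℤ[X]) N)
  set E := N * (3 * N - 2)
  simp only [sum_mul, finsetSum_coeff] at h
  rw [show ∀ Q : ℤ[X], (-1) ^ N * X ^ E * Q * P = (-1) ^ N * (Q * P * X ^ E) by
      intro Q; ring, hneg, coeff_mul_X_pow] at h
  rw [sum_congr rfl fun k hk => by
      rw [mul_assoc, mul_assoc, hneg,
        coeff_X_pow_mul_qBinom_mul_prod hnN (by rw [mem_range] at hk; omega)],
    sum_neg_one_pow_ite_natAbs_sq_eq hn hnN] at h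
  refine mul_left_cancel₀ (pow_ne_zero N (by norm_num : (-1 : ℤ) ≠ 0)) ?_
  rw [h]
  split_ifs
  · ring
  · simp

lemma prod_range_two_mul {M : Type*} [CommMonoid M] (f : ℕ → M) (n : ℕ) :
    ∏ i ∈ range (2 * n), f i = ∏ m ∈ range n, (f (2 * m) * f (2 * m + 1)) := by
  induction n with
  | zero => simp
  | succ n ih => rw [mul_add_one, prod_range_succ, prod_range_succ, prod_range_succ, ih, mul_assoc]

lemma prod_one_sub_X_pow_eq_sum (s : Finset ℕ) :
    ∏ i ∈ s, (1 - X ^ i : R[X]) = ∑ A ∈ s.powerset, (-1) ^ #A * X ^ (∑ i ∈ A, i) := by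
  classical
  simp [prod_sub, ← prod_pow_eq_pow_sum]

def pairsWithSum (s t : Finset ℕ) (n : ℕ) : Finset (Finset ℕ × Finset ℕ) :=
  (s.powerset ×ˢ t.powerset).filter fun p => ∑ x ∈ p.1, x + ∑ x ∈ p.2, x = n

lemma coeff_prod_one_sub_X_pow_mul_prod (s t : Finset ℕ) (n : ℕ) :
    ((∏ i ∈ s, (1 - X ^ i)) * ∏ i ∈ t, (1 - X ^ i) : R[X]).coeff n =
      ∑ p ∈ pairsWithSum s t n, (-1) ^ (#p.1 + #p.2) := by
  rw [prod_one_sub_X_pow_eq_sum, prod_one_sub_X_pow_eq_sum, sum_mul_sum, ← sum_product',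
    finsetSum_coeff, pairsWithSum, sum_filter]
  refine sum_congr rfl fun p _ => ?_
  rw [show (-1) ^ #p.1 * X ^ (∑ i ∈ p.1, i) * ((-1) ^ #p.2 * X ^ (∑ i ∈ p.2, i)) =
      C ((-1 : R) ^ (#p.1 + #p.2)) * X ^ (∑ i ∈ p.1, i + ∑ i ∈ p.2, i) by
        rw [C_pow, C_neg, C_1]; ring,
    coeff_C_mul_X_pow]
  simp only [eq_comm]

lemma natCard_even_sub_natCard_odd {α : Type*} (F : Finset α) {P : α → Prop}
    (hP : ∀ a, a ∈ F ↔ P a) (w : α → ℕ) :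
    (Nat.card {a // P a ∧ Even (w a)} : ℤ) - Nat.card {a // P a ∧ Odd (w a)} =
      ∑ a ∈ F, (-1) ^ w a := by
  classical
  have hcard (Q : ℕ → Prop) [DecidablePred Q] :
      Nat.card {a // P a ∧ Q (w a)} = #(F.filter fun a => Q (w a)) := by
    rw [← Nat.card_eq_finsetCard]
    exact Nat.card_congr (Equiv.subtypeEquivRight fun a => by simp [hP])
  rw [hcard, hcard, ← sum_filter_add_sum_filter_not F fun a => Even (w a),
    sum_congr rfl fun a ha => (mem_filter.1 ha).2.neg_one_pow,
    sum_congr rfl fun a ha => (Nat.not_even_iff_odd.1 (mem_filter.1 ha).2).neg_one_pow]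
  simp [Nat.not_even_iff_odd, sub_eq_add_neg]

/-- Parts never exceed `n`; the bound `2 * n` makes the generating product split exactly into
odd and even factors. -/
def twoColorPartitions (n : ℕ) : Finset (Finset ℕ × Finset ℕ) :=
  pairsWithSum ((range (2 * n)).filter Odd) ((range (2 * n + 1)).filter (0 < ·)) n

lemma mem_twoColorPartitions {n : ℕ} (p : Finset ℕ × Finset ℕ) :
    p ∈ twoColorPartitions n ↔
      (∀ x ∈ p.1, Odd x ∧ 0 < x) ∧ (∀ x ∈ p.2, 0 < x) ∧ ∑ x ∈ p.1, x + ∑ x ∈ p.2, x = n := by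
  simp only [twoColorPartitions, pairsWithSum, mem_filter, mem_product, mem_powerset, subset_iff,
    mem_range]
  constructor
  · rintro ⟨⟨hodd, hpos⟩, hsum⟩
    exact ⟨fun x hx => ⟨(hodd hx).2, (hodd hx).2.pos⟩, fun x hx => (hpos hx).2, hsum⟩
  · rintro ⟨hodd, hpos, hsum⟩
    have hle₁ (x) (hx : x ∈ p.1) : x ≤ n :=
      (single_le_sum (f := fun x => x) (fun _ _ => Nat.zero_le _) hx).trans (by omega)
    have hle₂ (x) (hx : x ∈ p.2) : x ≤ n :=
      (single_le_sum (f := fun x => x) (fun _ _ => Nat.zero_le _) hx).trans (by omega)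
    refine ⟨⟨fun x hx => ?_, fun x hx => ?_⟩, hsum⟩
    · have := hle₁ x hx; have := hodd x hx; exact ⟨by omega, this.1⟩
    · have := hle₂ x hx; have := hpos x hx; omega

lemma prod_filter_odd_mul_prod_filter_pos (n : ℕ) :
    (∏ i ∈ (range (2 * n)).filter Odd, (1 - X ^ i : R[X])) *
        ∏ i ∈ (range (2 * n + 1)).filter (0 < ·), (1 - X ^ i) =
      (∏ m ∈ range n, (1 - X ^ (2 * m + 1)) ^ 2) * ∏ i ∈ range n, (1 - (X ^ 2) ^ (i + 1)) := by
  rw [prod_filter, prod_filter, prod_range_succ', prod_range_two_mul, prod_range_two_mul]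
  simp [prod_mul_distrib, ← pow_mul, Nat.odd_iff, prod_pow]
  ring_nf

end Ring

/-- For `n ≥ 1`, as integers, `E₂(n) − E₃(n)` equals `2·(−1)ⁿ` if `n`
is a perfect square and `0` otherwise. Here `E₂(n)` (resp. `E₃(n)`) counts
two-color partitions `(g, b)` of `n` (with `g` a finite set of distinct odd
positive integers and `b` a finite set of distinct positive integers) whose total
number of parts `|g| + |b|` is even (resp. odd). -/
theorem two_color_total_parts_parity_difference (n : ℕ) (hn : 0 < n) :
    (Nat.card {p : Finset ℕ × Finset ℕ //
      ((∀ x ∈ p.1, Odd x ∧ 0 < x) ∧ (∀ x ∈ p.2, 0 < x) ∧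
        (∑ x ∈ p.1, x) + (∑ x ∈ p.2, x) = n) ∧
      Even (p.1.card + p.2.card)} : ℤ) -
    (Nat.card {p : Finset ℕ × Finset ℕ //
      ((∀ x ∈ p.1, Odd x ∧ 0 < x) ∧ (∀ x ∈ p.2, 0 < x) ∧
        (∑ x ∈ p.1, x) + (∑ x ∈ p.2, x) = n) ∧
      Odd (p.1.card + p.2.card)} : ℤ) =
    (if IsSquare n then 2 * (-1) ^ n else 0) := by
  rw [natCard_even_sub_natCard_odd (twoColorPartitions n) mem_twoColorPartitions,
    twoColorPartitions, ← coeff_prod_one_sub_X_pow_mul_prod, prod_filter_odd_mul_prod_filter_pos,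
    coeff_prod_odd_sq_mul_prod_even hn le_rfl]
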